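/- Assume in addition that 2ρ ∈ ℤ^ℓ. Let ξ ∈ ℂ satisfy ξ^r = 1 and let b, b* be integers with b·b* ≡ 1 (mod r). Then ∑_{k ∈ {0,…,r−1}^ℓ} ∑_{w,w' ∈ W} det(w)·det(w')·ξ^{b(B(ρ+k,ρ+k) − B(ρ,ρ))/2 + B(ρ+k, w·ρ + w'·ρ)} = |W| · γ_b(ξ) · ∑_{w ∈ W} det(w)·ξ^{−b*·B(ρ, ρ + w·ρ)}, where all exponents are integers. -/
import Mathlib


/-- Cast an integer vector to a rational vector. -/
def intVecQ {l : ℕ} (x : Fin l → ℤ) : Fin l → ℚ := fun i => (x i : ℚ)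

/-- Cast a vector of residues `k ∈ {0,…,r−1}^l` to a rational vector. -/
def finVecQ {l r : ℕ} (k : Fin l → Fin r) : Fin l → ℚ := fun i => ((k i : ℕ) : ℚ)

/-- The determinant of an element of `GL_l(ℤ)`. -/
def glDet {l : ℕ} (w : Matrix.GeneralLinearGroup (Fin l) ℤ) : ℤ :=
  Matrix.det (w : Matrix (Fin l) (Fin l) ℤ)

/-- The action of an element of `GL_l(ℤ)` on `ℚ^l`. -/
def glAct {l : ℕ} (w : Matrix.GeneralLinearGroup (Fin l) ℤ) (x : Fin l → ℚ) : Fin l → ℚ :=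
  Matrix.mulVec ((w : Matrix (Fin l) (Fin l) ℤ).map fun z => (z : ℚ)) x

lemma castFunQ : (fun z : ℤ => (z:ℚ)) = ⇑(Int.castRingHom ℚ) := rfl

lemma glAct_mul' {l : ℕ} (w w' : Matrix.GeneralLinearGroup (Fin l) ℤ) (x : Fin l → ℚ) :
    glAct (w * w') x = glAct w (glAct w' x) := by
  unfold glAct
  rw [Matrix.mulVec_mulVec, castFunQ, Units.val_mul, Matrix.map_mul]

lemma glDet_pm {l : ℕ} (w : Matrix.GeneralLinearGroup (Fin l) ℤ) :
    glDet w = 1 ∨ glDet w = -1 :=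
  Int.isUnit_iff.mp (Matrix.isUnits_det_units w)

lemma glDet_mul' {l : ℕ} (w w' : Matrix.GeneralLinearGroup (Fin l) ℤ) :
    glDet (w * w') = glDet w * glDet w' := by
  unfold glDet
  rw [Units.val_mul, Matrix.det_mul]

lemma zpow_congr_mod {r : ℕ} (hr : 0 < r) {ξ : ℂ} (hξ : ξ ^ r = 1) {a a' : ℤ}
    (h : a ≡ a' [ZMOD (r:ℤ)]) : ξ ^ a = ξ ^ a' := by
  have hne : ξ ≠ 0 := by
    intro h0
    rw [h0, zero_pow hr.ne'] at hξ
    exact one_ne_zero hξ.symm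
  obtain ⟨m, hm⟩ := h.dvd
  have ha : a = a' + (r:ℤ) * (-m) := by linarith
  rw [ha, zpow_add₀ hne, zpow_mul, zpow_natCast, hξ, one_zpow, mul_one]

lemma val_shift (s : ℕ) (x : ZMod (s+1)) (z : ℤ) :
    ∃ m : ℤ, ((x + (z : ZMod (s+1))).val : ℤ) = (x.val : ℤ) + z - ((s:ℤ)+1) * m := by
  have hcong : ((x + (z:ZMod (s+1))).val : ℤ) ≡ (x.val : ℤ) + z [ZMOD ((s:ℤ)+1)] := by
    have h1 : ((((x + (z:ZMod (s+1))).val : ℤ) : ZMod (s+1))) = (((x.val:ℤ) + z : ℤ) : ZMod (s+1)) := by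
      push_cast
      simp [ZMod.natCast_val, ZMod.intCast_cast]
    exact (ZMod.intCast_eq_intCast_iff' _ _ _).mp (by exact_mod_cast h1)
  obtain ⟨m, hm⟩ := hcong.dvd
  exact ⟨m, by linarith⟩

lemma intVecQ_add' {l : ℕ} (x y : Fin l → ℤ) : intVecQ (x + y) = intVecQ x + intVecQ y := by
  funext i; simp [intVecQ]

lemma finVecQ_eq_intVecQ {l s : ℕ} (k : Fin l → Fin (s+1)) :
    finVecQ k = intVecQ (fun i => ((k i : ℕ) : ℤ)) := by
  funext i; simp [finVecQ, intVecQ]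

/-- evaluation of the sum `F_{U_b}` over the shifted root lattice:
`∑_k ∑_{w,w'} det(w)det(w')·ξ^{b(B(ρ+k,ρ+k)−B(ρ,ρ))/2 + B(ρ+k, w·ρ + w'·ρ)}
  = |W| · γ_b(ξ) · ∑_w det(w)·ξ^{−b*·B(ρ, ρ+w·ρ)}`. -/
theorem stmt12 (l r : ℕ) (hl : 0 < l) (hr : 0 < r)
    (B : (Fin l → ℚ) →ₗ[ℚ] (Fin l → ℚ) →ₗ[ℚ] ℚ)
    (hBsymm : ∀ x y, B x y = B y x)
    (hBint : ∀ x y : Fin l → ℤ, ∃ n : ℤ, (n : ℚ) = B (intVecQ x) (intVecQ y))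
    (hBeven : ∀ y : Fin l → ℤ, ∃ n : ℤ, ((2 * n : ℤ) : ℚ) = B (intVecQ y) (intVecQ y))
    (ρ : Fin l → ℚ)
    (hρ : ∀ y : Fin l → ℤ, ∃ n : ℤ, (n : ℚ) = B ρ (intVecQ y))
    (h2ρ : ∃ z : Fin l → ℤ, ρ + ρ = intVecQ z)
    (W : Subgroup (Matrix.GeneralLinearGroup (Fin l) ℤ)) [Fintype W]
    (hWB : ∀ (w : W) (x y : Fin l → ℚ),
      B (glAct (w : Matrix.GeneralLinearGroup (Fin l) ℤ) x)
        (glAct (w : Matrix.GeneralLinearGroup (Fin l) ℤ) y) = B x y)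
    (hWρ : ∀ w : W, ∃ z : Fin l → ℤ,
      glAct (w : Matrix.GeneralLinearGroup (Fin l) ℤ) ρ - ρ = intVecQ z)
    (ξ : ℂ) (hξ : ξ ^ r = 1)
    (b bs : ℤ) (hbbs : b * bs ≡ 1 [ZMOD (r : ℤ)])
    (E : (Fin l → Fin r) → W → W → ℤ)
    (hE : ∀ (k : Fin l → Fin r) (w w' : W),
      ((E k w w' : ℤ) : ℚ) =
        (b : ℚ) * (B (ρ + finVecQ k) (ρ + finVecQ k) - B ρ ρ) / 2 +
          B (ρ + finVecQ k)
            (glAct (w : Matrix.GeneralLinearGroup (Fin l) ℤ) ρ +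
              glAct (w' : Matrix.GeneralLinearGroup (Fin l) ℤ) ρ))
    (g : (Fin l → Fin r) → ℤ)
    (hg : ∀ k : Fin l → Fin r, ((g k : ℤ) : ℚ) =
      (b : ℚ) * (B (ρ + finVecQ k) (ρ + finVecQ k) - B ρ ρ) / 2)
    (c : W → ℤ)
    (hc : ∀ w : W, ((c w : ℤ) : ℚ) =
      (bs : ℚ) * B ρ (ρ + glAct (w : Matrix.GeneralLinearGroup (Fin l) ℤ) ρ)) :
    ∑ k : Fin l → Fin r, ∑ w : W, ∑ w' : W,
        ((glDet (w : Matrix.GeneralLinearGroup (Fin l) ℤ) *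
            glDet (w' : Matrix.GeneralLinearGroup (Fin l) ℤ) : ℤ) : ℂ) * ξ ^ (E k w w')
      = (Fintype.card W : ℂ) * (∑ k : Fin l → Fin r, ξ ^ (g k)) *
          ∑ w : W, ((glDet (w : Matrix.GeneralLinearGroup (Fin l) ℤ) : ℤ) : ℂ) *
            ξ ^ (-(c w)) := by
  -- setup
  obtain ⟨s, rfl⟩ : ∃ s, r = s + 1 := ⟨r - 1, (Nat.succ_pred_eq_of_pos hr).symm⟩
  have hξne : ξ ≠ 0 := by
    intro h0; rw [h0, zero_pow hr.ne'] at hξ; exact one_ne_zero hξ.symm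
  -- bilinearity helpers
  have Badd : ∀ x y z : Fin l → ℚ, B (x + y) z = B x z + B y z := by
    intro x y z; rw [map_add]; rfl
  have Badd' : ∀ x y z : Fin l → ℚ, B x (y + z) = B x y + B x z := fun x y z => map_add (B x) y z
  have Bsub : ∀ x y z : Fin l → ℚ, B (x - y) z = B x z - B y z := by
    intro x y z; rw [map_sub]; rfl
  have Bsmul : ∀ (q : ℚ) (x z : Fin l → ℚ), B (q • x) z = q * B x z := by
    intro q x z; rw [map_smul]; rfl
  have Bsmul' : ∀ (q : ℚ) (x z : Fin l → ℚ), B x (q • z) = q * B x z := by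
    intro q x z; rw [map_smul]; rfl
  obtain ⟨z0, hz0⟩ := h2ρ
  obtain ⟨t, ht⟩ : ∃ t : ℤ, b * bs = 1 + ((s:ℤ)+1) * t := by
    obtain ⟨t0, ht0⟩ := hbbs.dvd
    exact ⟨-t0, by push_cast at ht0 ⊢; linarith⟩
  -- Step B : inner sum over k
  have hB2 : ∀ w w' : W, (∑ k : Fin l → Fin (s+1), ξ ^ (E k w w'))
      = (∑ k : Fin l → Fin (s+1), ξ ^ (g k)) * ξ ^ (-(c (w⁻¹ * w'))) := by
    intro w w'
    obtain ⟨z1, hz1⟩ := hWρ w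
    obtain ⟨z2, hz2⟩ := hWρ w'
    set u : W := w⁻¹ * w' with hu
    set lz : Fin l → ℤ := z0 + z1 + z2 with hlz
    set lq : Fin l → ℚ := intVecQ lz with hlq
    have hlam : glAct (w : Matrix.GeneralLinearGroup (Fin l) ℤ) ρ
        + glAct (w' : Matrix.GeneralLinearGroup (Fin l) ℤ) ρ = lq := by
      rw [hlq, hlz, intVecQ_add', intVecQ_add', ← hz0, ← hz1, ← hz2]
      funext i; simp; ring
    -- B lq lq = 2 * B ρ (ρ + u ρ)
    have huw : (w : Matrix.GeneralLinearGroup (Fin l) ℤ) * (u : Matrix.GeneralLinearGroup (Fin l) ℤ)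
        = (w' : Matrix.GeneralLinearGroup (Fin l) ℤ) := by
      rw [← Subgroup.coe_mul]; congr 1; rw [hu]; group
    have hww' : B (glAct (w : Matrix.GeneralLinearGroup (Fin l) ℤ) ρ)
        (glAct (w' : Matrix.GeneralLinearGroup (Fin l) ℤ) ρ)
        = B ρ (glAct (u : Matrix.GeneralLinearGroup (Fin l) ℤ) ρ) := by
      conv_lhs => rw [← huw, glAct_mul']
      exact hWB w ρ _
    have hscale : B lq lq = 2 * B ρ (ρ + glAct (u : Matrix.GeneralLinearGroup (Fin l) ℤ) ρ) := by
      rw [← hlam, Badd, Badd', Badd', Badd']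
      rw [hWB w ρ ρ, hWB w' ρ ρ, hww', hBsymm (glAct (w' : Matrix.GeneralLinearGroup (Fin l) ℤ) ρ), hww']
      ring
    -- the shift
    set v : Fin l → ℤ := fun i => bs * lz i with hv
    set σ : (Fin l → Fin (s+1)) ≃ (Fin l → Fin (s+1)) :=
      Equiv.piCongrRight (fun i => (Equiv.addRight ((v i : ZMod (s+1))) : ZMod (s+1) ≃ ZMod (s+1))) with hσ
    have key : ∀ k : Fin l → Fin (s+1), ξ ^ (E k w w') = ξ ^ (g (σ k)) * ξ ^ (-(c u)) := by
      intro k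
      set k' : Fin l → Fin (s+1) := σ k with hk'
      have hσval : ∀ i, ∃ m : ℤ, ((k' i : ℕ) : ℤ) = ((k i : ℕ) : ℤ) + v i - ((s:ℤ)+1) * m :=
        fun i => val_shift s (k i) (v i)
      choose m hm using hσval
      have hk'q : finVecQ k' = finVecQ k + (bs:ℚ) • lq - ((s:ℚ)+1) • intVecQ m := by
        funext i
        have h2 : (((k' i : ℕ):ℤ):ℚ) = (((k i :ℕ):ℤ):ℚ) + ((v i : ℤ):ℚ)
            - (((s:ℤ):ℚ)+1)*((m i : ℤ):ℚ) := by exact_mod_cast hm i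
        have hvq : ((v i : ℤ):ℚ) = (bs:ℚ) * ((lz i : ℤ):ℚ) := by rw [hv]; push_cast; ring
        simp only [finVecQ, Pi.add_apply, Pi.sub_apply, Pi.smul_apply, smul_eq_mul,
          hlq, intVecQ] at h2 hvq ⊢
        push_cast at h2 ⊢
        rw [h2, hvq]
      have hνk' : ρ + finVecQ k' = ρ + finVecQ k + (bs:ℚ) • lq - ((s:ℚ)+1) • intVecQ m := by
        rw [hk'q]
        module
      have Bsub2 : ∀ x y z : Fin l → ℚ, B x (y - z) = B x y - B x z :=
        fun x y z => map_sub (B x) y z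
      have hexp : B (ρ + finVecQ k + (bs:ℚ) • lq - ((s:ℚ)+1) • intVecQ m)
            (ρ + finVecQ k + (bs:ℚ) • lq - ((s:ℚ)+1) • intVecQ m)
          = B (ρ + finVecQ k) (ρ + finVecQ k)
            + 2*(bs:ℚ)*(B ρ lq + B (finVecQ k) lq) + (bs:ℚ)^2*B lq lq
            - 2*((s:ℚ)+1)*(B ρ (intVecQ m) + B (finVecQ k) (intVecQ m)
                + (bs:ℚ)*B lq (intVecQ m))
            + ((s:ℚ)+1)^2*B (intVecQ m) (intVecQ m) := by
        simp only [Badd, Badd', Bsub, Bsub2, Bsmul, Bsmul']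
        linear_combination (bs:ℚ)*(hBsymm lq ρ) + (bs:ℚ)*(hBsymm lq (finVecQ k))
          - ((s:ℚ)+1)*(hBsymm (intVecQ m) ρ) - ((s:ℚ)+1)*(hBsymm (intVecQ m) (finVecQ k))
          - ((s:ℚ)+1)*(bs:ℚ)*(hBsymm (intVecQ m) lq)
      -- integer witnesses
      obtain ⟨q1, hq1⟩ := hρ lz
      obtain ⟨q2, hq2⟩ := hBint (fun i => ((k i : ℕ) : ℤ)) lz
      have hQ : ((q1 + q2 : ℤ):ℚ) = B ρ lq + B (finVecQ k) lq := by
        rw [finVecQ_eq_intVecQ k, hlq]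
        push_cast
        rw [← hq1, ← hq2]
      obtain ⟨c1, hc1⟩ := hρ m
      obtain ⟨c2, hc2⟩ := hBint ((fun i => ((k i : ℕ) : ℤ)) + fun i => bs * lz i) m
      have hC : ((c1 + c2 : ℤ):ℚ) = B ρ (intVecQ m) + B (finVecQ k) (intVecQ m)
          + (bs:ℚ) * B lq (intVecQ m) := by
        have h4 : B (intVecQ ((fun i => ((k i : ℕ) : ℤ)) + fun i => bs * lz i)) (intVecQ m)
            = B (finVecQ k) (intVecQ m) + (bs:ℚ) * B lq (intVecQ m) := by
          have h5 : intVecQ (fun i => bs * lz i) = (bs:ℚ) • intVecQ lz := by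
            funext i
            simp only [intVecQ, Pi.smul_apply, smul_eq_mul]
            push_cast
            ring
          rw [intVecQ_add', Badd, finVecQ_eq_intVecQ k, hlq, h5, Bsmul]
        push_cast
        rw [hc1, hc2, h4]
        ring
      obtain ⟨Dz, hD⟩ := hBeven lz
      rw [← hlq] at hD
      obtain ⟨Mz, hM⟩ := hBeven m
      have hhalf : B ρ (ρ + glAct (u : Matrix.GeneralLinearGroup (Fin l) ℤ) ρ) = B lq lq / 2 := by
        rw [hscale]; ring
      have htQ : (b:ℚ) * bs = 1 + ((s:ℚ)+1)*t := by exact_mod_cast ht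
      have hkeyQ : ((E k w w' : ℤ):ℚ) = ((g k' : ℤ):ℚ) - ((c u : ℤ):ℚ)
          - ((s:ℚ)+1) * (((t*(q1+q2) + t*bs*Dz - b*(c1+c2) + ((s:ℤ)+1)*b*Mz : ℤ)):ℚ) := by
        rw [hE k w w', hg k', hc u, hlam, hνk', hexp, hhalf, Badd ρ (finVecQ k) lq, ← hQ, ← hC, ← hD, ← hM]
        push_cast
        linear_combination (-( ((q1:ℚ) + q2) + (bs:ℚ)*(Dz:ℚ))) * htQ
      have hkeyZ : E k w w' = g k' - c u
          - ((s:ℤ)+1) * (t*(q1+q2) + t*bs*Dz - b*(c1+c2) + ((s:ℤ)+1)*b*Mz) := by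
        exact_mod_cast hkeyQ
      have hmod : E k w w' ≡ g k' - c u [ZMOD ((s+1 : ℕ):ℤ)] := by
        rw [hkeyZ]
        refine Int.modEq_iff_dvd.mpr ⟨t*(q1+q2) + t*bs*Dz - b*(c1+c2) + ((s:ℤ)+1)*b*Mz, ?_⟩
        push_cast
        ring
      rw [zpow_congr_mod hr hξ hmod, sub_eq_add_neg, zpow_add₀ hξne]
    calc ∑ k : Fin l → Fin (s+1), ξ ^ (E k w w')
        = ∑ k : Fin l → Fin (s+1), ξ ^ (g (σ k)) * ξ ^ (-(c u)) := Finset.sum_congr rfl fun k _ => key k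
      _ = (∑ k : Fin l → Fin (s+1), ξ ^ (g (σ k))) * ξ ^ (-(c u)) := by rw [← Finset.sum_mul]
      _ = (∑ k : Fin l → Fin (s+1), ξ ^ (g k)) * ξ ^ (-(c u)) := by
            rw [Equiv.sum_comp σ (fun k => ξ ^ (g k))]
  -- Step C : regroup
  have hdet2 : ∀ (w0 u0 : W), ((glDet ((w0:W) : Matrix.GeneralLinearGroup (Fin l) ℤ) : ℤ) : ℂ)
      * ((glDet (((w0 * u0 : W)) : Matrix.GeneralLinearGroup (Fin l) ℤ) : ℤ) : ℂ)
      = ((glDet ((u0:W) : Matrix.GeneralLinearGroup (Fin l) ℤ) : ℤ) : ℂ) := by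
    intro w0 u0
    rw [Subgroup.coe_mul, glDet_mul']
    push_cast
    rcases glDet_pm ((w0:W) : Matrix.GeneralLinearGroup (Fin l) ℤ) with h | h <;> rw [h] <;> push_cast <;> ring
  calc ∑ k : Fin l → Fin (s+1), ∑ w : W, ∑ w' : W,
        ((glDet (w : Matrix.GeneralLinearGroup (Fin l) ℤ) *
            glDet (w' : Matrix.GeneralLinearGroup (Fin l) ℤ) : ℤ) : ℂ) * ξ ^ (E k w w')
      = ∑ w : W, ∑ w' : W, ((glDet (w : Matrix.GeneralLinearGroup (Fin l) ℤ) : ℤ) : ℂ)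
          * ((glDet (w' : Matrix.GeneralLinearGroup (Fin l) ℤ) : ℤ) : ℂ)
          * ∑ k : Fin l → Fin (s+1), ξ ^ (E k w w') := by
        rw [Finset.sum_comm]
        refine Finset.sum_congr rfl fun w _ => ?_
        rw [Finset.sum_comm]
        refine Finset.sum_congr rfl fun w' _ => ?_
        rw [Finset.mul_sum]
        refine Finset.sum_congr rfl fun k _ => ?_
        push_cast
        ring
    _ = ∑ w : W, ∑ w' : W, ((glDet (w : Matrix.GeneralLinearGroup (Fin l) ℤ) : ℤ) : ℂ)
          * ((glDet (w' : Matrix.GeneralLinearGroup (Fin l) ℤ) : ℤ) : ℂ)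
          * ((∑ k : Fin l → Fin (s+1), ξ ^ (g k)) * ξ ^ (-(c (w⁻¹ * w')))) := by
        refine Finset.sum_congr rfl fun w _ => Finset.sum_congr rfl fun w' _ => ?_
        rw [hB2 w w']
    _ = ∑ w : W, ∑ u : W, ((glDet (u : Matrix.GeneralLinearGroup (Fin l) ℤ) : ℤ) : ℂ)
          * ((∑ k : Fin l → Fin (s+1), ξ ^ (g k)) * ξ ^ (-(c u))) := by
        refine Finset.sum_congr rfl fun w _ => ?_
        rw [← Equiv.sum_comp (Equiv.mulLeft w)
          (fun w' : W => ((glDet (w : Matrix.GeneralLinearGroup (Fin l) ℤ) : ℤ) : ℂ)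
          * ((glDet (w' : Matrix.GeneralLinearGroup (Fin l) ℤ) : ℤ) : ℂ)
          * ((∑ k : Fin l → Fin (s+1), ξ ^ (g k)) * ξ ^ (-(c (w⁻¹ * w')))))]
        refine Finset.sum_congr rfl fun u _ => ?_
        simp only [Equiv.coe_mulLeft, inv_mul_cancel_left]
        rw [hdet2 w u]
    _ = (Fintype.card W : ℂ) * (∑ k : Fin l → Fin (s+1), ξ ^ (g k)) *
          ∑ w : W, ((glDet (w : Matrix.GeneralLinearGroup (Fin l) ℤ) : ℤ) : ℂ) * ξ ^ (-(c w)) := by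
        rw [Finset.sum_const, Finset.card_univ, nsmul_eq_mul, mul_assoc]
        congr 1
        rw [Finset.mul_sum]
        exact Finset.sum_congr rfl fun u _ => by ring
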